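/- arXiv:2102.10277 — 2 statements merged into one kernel-verified Lean document; each statement's English description precedes it below -/
import Mathlib

section
/- Let n, a, b, t be positive integers and let h be a functional mapping pairs of families of subsets of [n] to real numbers which is symmetric (h(F,G) = h(F',G') whenever |F'| = |F| and |G'| = |G|) and super-additive (whenever F × G ⊆ ∪_{i=1}^k F_i × G_i, one has h(F,G) ≤ Σ_{i=1}^k h(F_i,G_i)). Let N_h(n,a,b,t) be the maximum of h(F,G) over all pairs (F,G) where F is an a-uniform family, G is a b-uniform family, and F, G are cross-t-intersecting; let N̂_h(n,a,b,t) be the maximum of h over all Hirschorn pairs. Then N̂_h(n,a,b,t) ≤ N_h(n,a,b,t) ≤ n² · N̂_h(n,a,b,t). -/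
open Finset UV
open scoped FinsetFamily

/-- The ground set `[n] = {1,…,n}`. -/
def gs (n : ℕ) : Finset ℕ := Finset.Icc 1 n

/-- `F` is an `m`-uniform family of subsets of `[n]`. -/
def UniformOn (n m : ℕ) (F : Finset (Finset ℕ)) : Prop :=
  ∀ A ∈ F, A ⊆ gs n ∧ A.card = m

/-- `F` and `G` are cross-`t`-intersecting. -/
def CrossInt (t : ℕ) (F G : Finset (Finset ℕ)) : Prop :=
  ∀ A ∈ F, ∀ B ∈ G, t ≤ (A ∩ B).card

/-- `F` is a family of subsets of `[n]`. -/
def FamOn (n : ℕ) (F : Finset (Finset ℕ)) : Prop := ∀ A ∈ F, A ⊆ gs n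

/-- The family `{A ∈ C([n],m) : |A ∩ [s]| ≥ u}` appearing in a Hirschorn pair. -/
def HirschF (n m s u : ℕ) : Finset (Finset ℕ) :=
  ((gs n).powersetCard m).filter (fun A => u ≤ (A ∩ gs s).card)

lemma mem_gs {s x : ℕ} : x ∈ gs s ↔ 1 ≤ x ∧ x ≤ s := by simp [gs]
lemma card_gs (s : ℕ) : (gs s).card = s := by simp [gs]

lemma compress_fired {i j : ℕ} {A : Finset ℕ} (hj : j ∈ A) (hi : i ∉ A) :
    UV.compress {i} {j} A = insert i (A.erase j) := by
  have hij : i ≠ j := fun e => hi (e ▸ hj)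
  rw [UV.compress, if_pos ⟨by simpa using hi, by simpa using hj⟩]
  ext y
  simp only [sup_eq_union, mem_sdiff, mem_union, mem_singleton, mem_insert, mem_erase]
  constructor
  · rintro ⟨hy | hy, hyj⟩
    · exact Or.inr ⟨hyj, hy⟩
    · exact Or.inl hy
  · rintro (rfl | ⟨hyj, hy⟩)
    · exact ⟨Or.inr rfl, hij⟩
    · exact ⟨Or.inl hy, hyj⟩

lemma compress_not_fired {i j : ℕ} {A : Finset ℕ} (H : j ∉ A ∨ i ∈ A) :
    UV.compress {i} {j} A = A := by
  rw [UV.compress, if_neg]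
  rintro ⟨h1, h2⟩
  simp only [disjoint_singleton_left, singleton_subset_iff] at h1 h2
  tauto

lemma fired_of_ne {i j : ℕ} {A : Finset ℕ} (h : UV.compress {i} {j} A ≠ A) :
    j ∈ A ∧ i ∉ A := by
  by_contra hc
  exact h (compress_not_fired (by tauto))


-- L1
lemma L1 {i j : ℕ} {A B : Finset ℕ} (hjA : j ∈ A) (hiA : i ∉ A) (hjB : j ∈ B) (hiB : i ∉ B) :
    ((insert i (A.erase j)) ∩ (insert i (B.erase j))).card = (A ∩ B).card := by
  have hset : (insert i (A.erase j)) ∩ (insert i (B.erase j)) = insert i ((A ∩ B).erase j) := by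
    ext y
    simp only [mem_inter, mem_insert, mem_erase]
    constructor
    · rintro ⟨rfl | ⟨h1, h2⟩, h3⟩
      · exact Or.inl rfl
      · rcases h3 with rfl | ⟨h4, h5⟩
        · exact (hiA h2).elim
        · exact Or.inr ⟨h1, h2, h5⟩
    · rintro (rfl | ⟨h1, h2, h3⟩)
      · exact ⟨Or.inl rfl, Or.inl rfl⟩
      · exact ⟨Or.inr ⟨h1, h2⟩, Or.inr ⟨h1, h3⟩⟩
  rw [hset, card_insert_of_notMem (fun hy => hiA (mem_inter.1 (mem_of_mem_erase hy)).1)]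
  have hj : j ∈ A ∩ B := mem_inter.2 ⟨hjA, hjB⟩
  rw [card_erase_of_mem hj]
  have := card_pos.2 ⟨j, hj⟩
  omega

-- L2 : one side compressed, other side forgiving
lemma L2 {i j : ℕ} {A B : Finset ℕ} (hjA : j ∈ A) (hiA : i ∉ A) (H : i ∈ B ∨ j ∉ B) :
    (A ∩ B).card ≤ ((insert i (A.erase j)) ∩ B).card := by
  by_cases hjB : j ∈ B
  · rcases H with hiB | hjB'
    · have hset : (insert i (A.erase j)) ∩ B = insert i ((A ∩ B).erase j) := by
        ext y
        simp only [mem_inter, mem_insert, mem_erase]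
        constructor
        · rintro ⟨rfl | ⟨h1, h2⟩, h3⟩
          · exact Or.inl rfl
          · exact Or.inr ⟨h1, h2, h3⟩
        · rintro (rfl | ⟨h1, h2, h3⟩)
          · exact ⟨Or.inl rfl, hiB⟩
          · exact ⟨Or.inr ⟨h1, h2⟩, h3⟩
      rw [hset, card_insert_of_notMem (fun hy => hiA (mem_inter.1 (mem_of_mem_erase hy)).1)]
      have hj : j ∈ A ∩ B := mem_inter.2 ⟨hjA, hjB⟩
      rw [card_erase_of_mem hj]
      have := card_pos.2 ⟨j, hj⟩
      omega
    · exact (hjB' hjB).elim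
  · apply card_le_card
    intro y hy
    rcases mem_inter.1 hy with ⟨h1, h2⟩
    exact mem_inter.2 ⟨mem_insert.2 (Or.inr (mem_erase.2 ⟨fun e => hjB (e ▸ h2), h1⟩)), h2⟩

-- L3 : insert i (X.erase j) ∩ Y = (X ∩ Y).erase j when i ∉ Y
lemma L3 {i j : ℕ} {X Y : Finset ℕ} (hiY : i ∉ Y) :
    (insert i (X.erase j)) ∩ Y = (X ∩ Y).erase j := by
  ext y
  simp only [mem_inter, mem_insert, mem_erase]
  constructor
  · rintro ⟨rfl | ⟨h1, h2⟩, h3⟩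
    · exact (hiY h3).elim
    · exact ⟨h1, h2, h3⟩
  · rintro ⟨h1, h2, h3⟩
    exact ⟨Or.inr ⟨h1, h2⟩, h3⟩

theorem crossInt_compression {t i j : ℕ} {F G : Finset (Finset ℕ)} (hFG : CrossInt t F G) :
    CrossInt t (𝓒 {i} {j} F) (𝓒 {i} {j} G) := by
  intro A' hA' B' hB'
  rw [UV.mem_compression] at hA' hB'
  rcases hA' with ⟨hA'F, hcA'F⟩ | ⟨hA'F, A, hAF, hcA⟩
  · rcases hB' with ⟨hB'G, _⟩ | ⟨hB'G, B, hBG, hcB⟩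
    · exact hFG A' hA'F B' hB'G
    · -- B' is a genuine compression
      have hBne : UV.compress {i} {j} B ≠ B := fun e => hB'G (by rw [← hcB, e]; exact hBG)
      obtain ⟨hjB, hiB⟩ := fired_of_ne hBne
      rw [compress_fired hjB hiB] at hcB
      subst hcB
      by_cases hjA' : j ∈ A'
      · by_cases hiA' : i ∈ A'
        · calc t ≤ (B ∩ A').card := by rw [inter_comm]; exact hFG A' hA'F B hBG
            _ ≤ ((insert i (B.erase j)) ∩ A').card := L2 hjB hiB (Or.inl hiA')
            _ = (A' ∩ (insert i (B.erase j))).card := by rw [inter_comm]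
        · -- use compress A' ∈ F
          rw [compress_fired hjA' hiA'] at hcA'F
          have h1 : t ≤ ((insert i (A'.erase j)) ∩ B).card := hFG _ hcA'F B hBG
          rw [L3 hiB] at h1
          have h2 : A' ∩ (insert i (B.erase j)) = (A' ∩ B).erase j := by
            rw [inter_comm, L3 hiA', inter_comm]
          rw [h2]
          exact h1
      · calc t ≤ (B ∩ A').card := by rw [inter_comm]; exact hFG A' hA'F B hBG
          _ ≤ ((insert i (B.erase j)) ∩ A').card := L2 hjB hiB (Or.inr hjA')
          _ = (A' ∩ (insert i (B.erase j))).card := by rw [inter_comm]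
  · -- A' is a genuine compression
    have hAne : UV.compress {i} {j} A ≠ A := fun e => hA'F (by rw [← hcA, e]; exact hAF)
    obtain ⟨hjA, hiA⟩ := fired_of_ne hAne
    rw [compress_fired hjA hiA] at hcA
    subst hcA
    rcases hB' with ⟨hB'G, hcB'G⟩ | ⟨hB'G, B, hBG, hcB⟩
    · by_cases hjB' : j ∈ B'
      · by_cases hiB' : i ∈ B'
        · calc t ≤ (A ∩ B').card := hFG A hAF B' hB'G
            _ ≤ ((insert i (A.erase j)) ∩ B').card := L2 hjA hiA (Or.inl hiB')
        · rw [compress_fired hjB' hiB'] at hcB'G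
          have h1 : t ≤ (A ∩ (insert i (B'.erase j))).card := hFG A hAF _ hcB'G
          rw [inter_comm, L3 hiA, inter_comm] at h1
          rw [L3 hiB']
          exact h1
      · calc t ≤ (A ∩ B').card := hFG A hAF B' hB'G
          _ ≤ ((insert i (A.erase j)) ∩ B').card := L2 hjA hiA (Or.inr hjB')
    · have hBne : UV.compress {i} {j} B ≠ B := fun e => hB'G (by rw [← hcB, e]; exact hBG)
      obtain ⟨hjB, hiB⟩ := fired_of_ne hBne
      rw [compress_fired hjB hiB] at hcB
      subst hcB
      rw [L1 hjA hiA hjB hiB]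
      exact hFG A hAF B hBG


theorem uniformOn_compression {n m i j : ℕ} {F : Finset (Finset ℕ)} (hi : i ∈ gs n)
    (hF : UniformOn n m F) : UniformOn n m (𝓒 {i} {j} F) := by
  intro A' hA'
  rw [UV.mem_compression] at hA'
  rcases hA' with ⟨hA'F, _⟩ | ⟨hA'F, A, hAF, hcA⟩
  · exact hF A' hA'F
  · by_cases hne : UV.compress {i} {j} A = A
    · rw [hne] at hcA; subst hcA; exact hF A hAF
    · obtain ⟨hjA, hiA⟩ := fired_of_ne hne
      rw [compress_fired hjA hiA] at hcA
      subst hcA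
      obtain ⟨hsub, hcard⟩ := hF A hAF
      constructor
      · intro y hy
        rcases mem_insert.1 hy with rfl | hy'
        · exact hi
        · exact hsub (mem_of_mem_erase hy')
      · rw [card_insert_of_notMem (fun hy => hiA (mem_of_mem_erase hy)),
          card_erase_of_mem hjA, hcard]
        have : 1 ≤ A.card := card_pos.2 ⟨j, hjA⟩
        omega

def famW (F : Finset (Finset ℕ)) : ℕ := ∑ A ∈ F, ∑ x ∈ A, x

lemma w_compress_lt {i j : ℕ} {A : Finset ℕ} (hij : i < j)
    (hfired : UV.compress {i} {j} A ≠ A) :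
    (∑ x ∈ UV.compress {i} {j} A, x) < ∑ x ∈ A, x := by
  obtain ⟨hjA, hiA⟩ := fired_of_ne hfired
  rw [compress_fired hjA hiA,
    sum_insert (fun hy => hiA (mem_of_mem_erase hy))]
  have h2 : (∑ x ∈ A.erase j, x) + j = ∑ x ∈ A, x := Finset.sum_erase_add A _ hjA
  omega

lemma compression_eq_of_all {i j : ℕ} {F : Finset (Finset ℕ)}
    (hall : ∀ A ∈ F, UV.compress {i} {j} A ∈ F) : 𝓒 {i} {j} F = F := by
  rw [UV.compression]
  have h1 : {a ∈ F | UV.compress {i} {j} a ∈ F} = F := filter_true_of_mem hall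
  have h2 : {a ∈ F.image (UV.compress {i} {j}) | a ∉ F} = ∅ := by
    rw [filter_eq_empty_iff]
    intro a ha
    obtain ⟨b, hb, rfl⟩ := mem_image.1 ha
    simp only [not_not]
    exact hall b hb
  rw [h1, h2, union_empty]

lemma famW_compression_lt {i j : ℕ} {F : Finset (Finset ℕ)} (hij : i < j)
    (hne : 𝓒 {i} {j} F ≠ F) : famW (𝓒 {i} {j} F) < famW F := by
  classical
  set c := UV.compress ({i} : Finset ℕ) {j} with hc
  set T := {A ∈ F | c A ∉ F} with hT
  have hTne : T.Nonempty := by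
    rcases eq_empty_or_nonempty T with he | hne'
    · exfalso
      apply hne
      apply compression_eq_of_all
      intro A hA
      by_contra hcA
      exact (eq_empty_iff_forall_notMem.1 he A) (mem_filter.2 ⟨hA, hcA⟩)
    · exact hne'
  have hsplit : famW (𝓒 {i} {j} F) =
      (∑ A ∈ {a ∈ F | c a ∈ F}, ∑ x ∈ A, x) +
      ∑ A ∈ {a ∈ F.image c | a ∉ F}, ∑ x ∈ A, x := by
    rw [famW, UV.compression, sum_union UV.compress_disjoint]
  have hVsub : {a ∈ F.image c | a ∉ F} ⊆ T.image c := by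
    intro a' ha'
    obtain ⟨ha1, ha2⟩ := mem_filter.1 ha'
    obtain ⟨A, hA, rfl⟩ := mem_image.1 ha1
    exact mem_image.2 ⟨A, mem_filter.2 ⟨hA, ha2⟩, rfl⟩
  have hV : (∑ A ∈ {a ∈ F.image c | a ∉ F}, ∑ x ∈ A, x) ≤ ∑ A ∈ T.image c, ∑ x ∈ A, x :=
    sum_le_sum_of_subset hVsub
  have hIm : (∑ A ∈ T.image c, ∑ x ∈ A, x) = ∑ A ∈ T, ∑ x ∈ c A, x := by
    apply sum_image
    intro x hx y hy hxy
    exact UV.compress_injOn (Finset.mem_coe.2 hx) (Finset.mem_coe.2 hy) hxy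
  have hlt : (∑ A ∈ T, ∑ x ∈ c A, x) < ∑ A ∈ T, ∑ x ∈ A, x := by
    apply sum_lt_sum_of_nonempty hTne
    intro A hA
    obtain ⟨hAF, hcA⟩ := mem_filter.1 hA
    exact w_compress_lt hij (fun e => hcA (by rw [hc, e]; exact hAF))
  have hpart : (∑ A ∈ {a ∈ F | c a ∈ F}, ∑ x ∈ A, x) + (∑ A ∈ T, ∑ x ∈ A, x) = famW F := by
    rw [famW, hT]
    exact sum_filter_add_sum_filter_not F _ _
  omega

lemma famW_compression_le {i j : ℕ} {F : Finset (Finset ℕ)} (hij : i < j) :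
    famW (𝓒 {i} {j} F) ≤ famW F := by
  by_cases hne : 𝓒 {i} {j} F = F
  · rw [hne]
  · exact le_of_lt (famW_compression_lt hij hne)

def StableG (n : ℕ) (G : Finset (Finset ℕ)) : Prop :=
  ∀ i j : ℕ, i ∈ gs n → j ∈ gs n → i < j → UV.IsCompressed ({i} : Finset ℕ) {j} G

lemma exists_stable_pair {n a b t : ℕ} :
    ∀ (F G : Finset (Finset ℕ)), UniformOn n a F → UniformOn n b G → CrossInt t F G →
    ∃ F' G', UniformOn n a F' ∧ UniformOn n b G' ∧ CrossInt t F' G' ∧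
      F'.card = F.card ∧ G'.card = G.card ∧ StableG n G' := by
  suffices H : ∀ N (F G : Finset (Finset ℕ)), famW F + famW G ≤ N →
      UniformOn n a F → UniformOn n b G → CrossInt t F G →
      ∃ F' G', UniformOn n a F' ∧ UniformOn n b G' ∧ CrossInt t F' G' ∧
        F'.card = F.card ∧ G'.card = G.card ∧ StableG n G' by
    intro F G hF hG hFG
    exact H (famW F + famW G) F G le_rfl hF hG hFG
  intro N
  induction N using Nat.strong_induction_on with
  | _ N ih =>
    intro F G hle hF hG hFG
    by_cases hstab : StableG n G
    · exact ⟨F, G, hF, hG, hFG, rfl, rfl, hstab⟩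
    · rw [StableG] at hstab
      push_neg at hstab
      obtain ⟨i, j, hi, hj, hij, hnc⟩ := hstab
      have hGlt : famW (𝓒 {i} {j} G) < famW G := famW_compression_lt hij hnc
      have hFle : famW (𝓒 {i} {j} F) ≤ famW F := famW_compression_le hij
      have hlt : famW (𝓒 {i} {j} F) + famW (𝓒 {i} {j} G) < N := by omega
      obtain ⟨F', G', h1, h2, h3, h4, h5, h6⟩ :=
        ih _ hlt (𝓒 {i} {j} F) (𝓒 {i} {j} G) le_rfl
          (uniformOn_compression hi hF) (uniformOn_compression hi hG)
          (crossInt_compression hFG)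
      exact ⟨F', G', h1, h2, h3, by rw [h4, UV.card_compression],
        by rw [h5, UV.card_compression], h6⟩
lemma no_escape {n t : ℕ} (ht : 0 < t) {G : Finset (Finset ℕ)} (hstab : StableG n G)
    (A : Finset ℕ) (hA : A ⊆ gs n) (hcross : ∀ B' ∈ G, t ≤ (A ∩ B').card) :
    ∀ m (B' : Finset ℕ), B' ∈ G → (A ∩ B').card = m →
      (∀ s : ℕ, ((A ∩ B') ∩ gs s).card < t + ((gs n \ (A ∪ B')) ∩ gs s).card) → False := by
  intro m
  induction m using Nat.strong_induction_on with
  | _ m ih =>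
    intro B' hB' hm hinv
    have htm : t ≤ m := hm ▸ hcross B' hB'
    have hXne : (A ∩ B').Nonempty := card_pos.1 (by omega)
    set X := A ∩ B' with hX
    set H := gs n \ (A ∪ B') with hH
    have hXsub : X ⊆ gs n := fun y hy => hA (mem_inter.1 hy).1
    set x := X.max' hXne with hxdef
    have hxX : x ∈ X := X.max'_mem hXne
    have hxA : x ∈ A := (mem_inter.1 hxX).1
    have hxB : x ∈ B' := (mem_inter.1 hxX).2
    have hxgs : x ∈ gs n := hXsub hxX
    have hXgs : X ∩ gs x = X := by
      apply inter_eq_left.2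
      intro y hy
      exact mem_gs.2 ⟨(mem_gs.1 (hXsub hy)).1, X.le_max' y hy⟩
    have hinvx := hinv x
    rw [hXgs, hm] at hinvx
    have hHne : (H ∩ gs x).Nonempty := card_pos.1 (by omega)
    set h := (H ∩ gs x).max' hHne with hhdef
    have hhmem : h ∈ H ∩ gs x := (H ∩ gs x).max'_mem hHne
    have hhH : h ∈ H := (mem_inter.1 hhmem).1
    have hhgsn : h ∈ gs n := (mem_sdiff.1 hhH).1
    have hhnAB : h ∉ A ∪ B' := (mem_sdiff.1 hhH).2
    have hhA : h ∉ A := fun hc => hhnAB (mem_union.2 (Or.inl hc))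
    have hhB : h ∉ B' := fun hc => hhnAB (mem_union.2 (Or.inr hc))
    have hhx : h < x := by
      have h1 : h ≤ x := (mem_gs.1 (mem_inter.1 hhmem).2).2
      have h2 : h ≠ x := fun e => hhA (e ▸ hxA)
      omega
    -- the new set
    set B'' := insert h (B'.erase x) with hB''
    have hB''G : B'' ∈ G := by
      have hcomp := hstab h x hhgsn hxgs hhx
      have := UV.compress_mem_compression (u := ({h} : Finset ℕ)) (v := {x}) hB'
      rw [hcomp.eq, compress_fired hxB hhB] at this
      exact this
    have hX'' : A ∩ B'' = X.erase x := by
      ext y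
      simp only [hB'', mem_inter, mem_insert, mem_erase, hX]
      constructor
      · rintro ⟨hyA, rfl | ⟨hyx, hyB⟩⟩
        · exact (hhA hyA).elim
        · exact ⟨hyx, hyA, hyB⟩
      · rintro ⟨hyx, hyA, hyB⟩
        exact ⟨hyA, Or.inr ⟨hyx, hyB⟩⟩
    have hH'' : gs n \ (A ∪ B'') = H.erase h := by
      ext y
      constructor
      · intro hy
        obtain ⟨hygs, hyAB⟩ := mem_sdiff.1 hy
        have hyA : y ∉ A := fun hc => hyAB (mem_union.2 (Or.inl hc))
        have hyB'' : y ∉ B'' := fun hc => hyAB (mem_union.2 (Or.inr hc))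
        have hyh : y ≠ h := fun e => hyB'' (by rw [e, hB'']; exact mem_insert_self _ _)
        have hyB' : y ∉ B' := by
          intro hc
          by_cases hyx : y = x
          · exact hyA (hyx ▸ hxA)
          · exact hyB'' (by rw [hB'']; exact mem_insert.2 (Or.inr (mem_erase.2 ⟨hyx, hc⟩)))
        exact mem_erase.2 ⟨hyh, mem_sdiff.2 ⟨hygs, fun hc => (mem_union.1 hc).elim hyA hyB'⟩⟩
      · intro hy
        obtain ⟨hyh, hyH⟩ := mem_erase.1 hy
        obtain ⟨hygs, hyAB⟩ := mem_sdiff.1 hyH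
        have hyA : y ∉ A := fun hc => hyAB (mem_union.2 (Or.inl hc))
        have hyB' : y ∉ B' := fun hc => hyAB (mem_union.2 (Or.inr hc))
        refine mem_sdiff.2 ⟨hygs, ?_⟩
        intro hc
        rcases mem_union.1 hc with hc1 | hc2
        · exact hyA hc1
        · rw [hB''] at hc2
          rcases mem_insert.1 hc2 with rfl | hc3
          · exact hyh rfl
          · exact hyB' (mem_of_mem_erase hc3)
    have hcard'' : (A ∩ B'').card = m - 1 := by
      rw [hX'', card_erase_of_mem hxX, hm]
    apply ih (m - 1) (by omega) B'' hB''G hcard''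
    intro s
    rw [hX'', hH'']
    by_cases hs1 : x ≤ s
    · have e1 : (X.erase x) ∩ gs s = (X ∩ gs s).erase x := by
        ext y; simp only [mem_inter, mem_erase]; tauto
      have e2 : (H.erase h) ∩ gs s = (H ∩ gs s).erase h := by
        ext y; simp only [mem_inter, mem_erase]; tauto
      have hx_mem : x ∈ X ∩ gs s := mem_inter.2 ⟨hxX, mem_gs.2 ⟨(mem_gs.1 hxgs).1, hs1⟩⟩
      have hh_mem : h ∈ H ∩ gs s := mem_inter.2 ⟨hhH, mem_gs.2 ⟨(mem_gs.1 hhgsn).1, by omega⟩⟩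
      have c1 := card_pos.2 ⟨x, hx_mem⟩
      have c2 := card_pos.2 ⟨h, hh_mem⟩
      rw [e1, e2, card_erase_of_mem hx_mem, card_erase_of_mem hh_mem]
      have := hinv s
      omega
    · have e1 : (X.erase x) ∩ gs s = X ∩ gs s := by
        ext y
        simp only [mem_inter, mem_erase]
        constructor
        · rintro ⟨⟨_, hyX⟩, hygs⟩; exact ⟨hyX, hygs⟩
        · rintro ⟨hyX, hygs⟩
          have : y ≤ s := (mem_gs.1 hygs).2
          exact ⟨⟨by omega, hyX⟩, hygs⟩
      rw [e1]
      by_cases hs2 : h ≤ s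
      · -- h ≤ s < x
        have e2 : (H.erase h) ∩ gs s = (H ∩ gs s).erase h := by
          ext y; simp only [mem_inter, mem_erase]; tauto
        have hh_mem : h ∈ H ∩ gs s := mem_inter.2 ⟨hhH, mem_gs.2 ⟨(mem_gs.1 hhgsn).1, hs2⟩⟩
        have c2 := card_pos.2 ⟨h, hh_mem⟩
        have e3 : H ∩ gs s = H ∩ gs x := by
          apply Finset.Subset.antisymm
          · intro y hy
            obtain ⟨hyH, hygs⟩ := mem_inter.1 hy
            exact mem_inter.2 ⟨hyH, mem_gs.2 ⟨(mem_gs.1 hygs).1, by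
              have := (mem_gs.1 hygs).2; omega⟩⟩
          · intro y hy
            obtain ⟨hyH, hygs⟩ := mem_inter.1 hy
            have hyh : y ≤ h := (H ∩ gs x).le_max' y (mem_inter.2 ⟨hyH, hygs⟩)
            exact mem_inter.2 ⟨hyH, mem_gs.2 ⟨(mem_gs.1 hygs).1, by omega⟩⟩
        have e4 : X ∩ gs s ⊆ X.erase x := by
          intro y hy
          obtain ⟨hyX, hygs⟩ := mem_inter.1 hy
          exact mem_erase.2 ⟨by have := (mem_gs.1 hygs).2; omega, hyX⟩
        have c4 : (X ∩ gs s).card ≤ X.card - 1 := by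
          have := card_le_card e4
          rw [card_erase_of_mem hxX] at this
          exact this
        rw [e2, card_erase_of_mem hh_mem, e3]
        have hc := hinvx
        have hXc : X.card = m := hm
        omega
      · -- s < h
        have e2 : (H.erase h) ∩ gs s = H ∩ gs s := by
          ext y
          simp only [mem_inter, mem_erase]
          constructor
          · rintro ⟨⟨_, hyH⟩, hygs⟩; exact ⟨hyH, hygs⟩
          · rintro ⟨hyH, hygs⟩
            have : y ≤ s := (mem_gs.1 hygs).2
            exact ⟨⟨by omega, hyH⟩, hygs⟩
        rw [e2]
        exact hinv s

lemma exists_good_s {n t : ℕ} (hn : 0 < n) (ht : 0 < t) {G : Finset (Finset ℕ)}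
    (hstab : StableG n G) (A : Finset ℕ) (hA : A ⊆ gs n)
    (hcross : ∀ B' ∈ G, t ≤ (A ∩ B').card) (B : Finset ℕ) (hBG : B ∈ G) (hB : B ⊆ gs n) :
    ∃ s ∈ gs n, s + t ≤ (A ∩ gs s).card + (B ∩ gs s).card := by
  by_contra hcon
  push_neg at hcon
  apply no_escape ht hstab A hA hcross (A ∩ B).card B hBG rfl
  have main : ∀ s : ℕ, s ≤ n → ((A ∩ B) ∩ gs s).card < t + ((gs n \ (A ∪ B)) ∩ gs s).card := by
    intro s hsn
    rcases Nat.eq_zero_or_pos s with rfl | hs0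
    · have : gs 0 = ∅ := by simp [gs]
      rw [this, inter_empty, inter_empty]
      simpa using ht
    · have hsgs : s ∈ gs n := mem_gs.2 ⟨hs0, hsn⟩
      have key := hcon s hsgs
      have i1 : ((A ∪ B) ∩ gs s).card + ((A ∩ B) ∩ gs s).card
          = (A ∩ gs s).card + (B ∩ gs s).card := by
        have hu : (A ∪ B) ∩ gs s = (A ∩ gs s) ∪ (B ∩ gs s) := union_inter_distrib_right ..
        have hi : (A ∩ B) ∩ gs s = (A ∩ gs s) ∩ (B ∩ gs s) := by
          ext y; simp only [mem_inter]; tauto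
        rw [hu, hi]
        exact card_union_add_card_inter _ _
      have i2 : ((A ∪ B) ∩ gs s).card + ((gs n \ (A ∪ B)) ∩ gs s).card = s := by
        have hs : (gs n \ (A ∪ B)) ∩ gs s = gs s \ ((A ∪ B) ∩ gs s) := by
          ext y
          simp only [mem_inter, mem_sdiff]
          constructor
          · rintro ⟨⟨hygs, hyAB⟩, hygss⟩
            exact ⟨hygss, fun hc => hyAB hc.1⟩
          · rintro ⟨hygss, hyc⟩
            have hyn : y ∈ gs n := mem_gs.2 ⟨(mem_gs.1 hygss).1, le_trans (mem_gs.1 hygss).2 hsn⟩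
            exact ⟨⟨hyn, fun hc => hyc ⟨hc, hygss⟩⟩, hygss⟩
        rw [hs]
        have := card_sdiff_add_card_eq_card (inter_subset_right (s₁ := A ∪ B) (s₂ := gs s))
        rw [card_gs] at this
        omega
      omega
  intro s
  by_cases hsn : s ≤ n
  · exact main s hsn
  · have hgs : gs n ⊆ gs s := Finset.Icc_subset_Icc le_rfl (by omega)
    have e1 : (A ∩ B) ∩ gs s = (A ∩ B) ∩ gs n := by
      rw [inter_eq_left.2 (fun y hy => hgs (hA (mem_inter.1 hy).1)),
        inter_eq_left.2 (fun y hy => hA (mem_inter.1 hy).1)]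
    have e2 : (gs n \ (A ∪ B)) ∩ gs s = (gs n \ (A ∪ B)) ∩ gs n := by
      rw [inter_eq_left.2 (fun y hy => hgs (mem_sdiff.1 hy).1),
        inter_eq_left.2 (fun y hy => (mem_sdiff.1 hy).1)]
    rw [e1, e2]
    exact main n le_rfl

lemma mem_HirschF {n m s u : ℕ} {A : Finset ℕ} :
    A ∈ HirschF n m s u ↔ A ⊆ gs n ∧ A.card = m ∧ u ≤ (A ∩ gs s).card := by
  simp only [HirschF, mem_filter, mem_powersetCard]
  tauto

lemma uniformOn_HirschF {n m s u : ℕ} : UniformOn n m (HirschF n m s u) :=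
  fun A hA => ⟨(mem_HirschF.1 hA).1, (mem_HirschF.1 hA).2.1⟩

lemma famOn_of_uniformOn {n m : ℕ} {F : Finset (Finset ℕ)} (hF : UniformOn n m F) :
    FamOn n F := fun A hA => (hF A hA).1

lemma famOn_empty {n : ℕ} : FamOn n (∅ : Finset (Finset ℕ)) :=
  fun A hA => absurd hA (notMem_empty A)

lemma crossInt_HirschF {n a b t s u v : ℕ} (huv : u + v = s + t) :
    CrossInt t (HirschF n a s u) (HirschF n b s v) := by
  intro A hA B hB
  obtain ⟨_, _, hu⟩ := mem_HirschF.1 hA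
  obtain ⟨_, _, hv⟩ := mem_HirschF.1 hB
  have c1 : ((A ∩ gs s) ∪ (B ∩ gs s)).card ≤ s := by
    have h1 : (A ∩ gs s) ∪ (B ∩ gs s) ⊆ gs s :=
      union_subset inter_subset_right inter_subset_right
    have := card_le_card h1
    rwa [card_gs] at this
  have c2 : ((A ∩ gs s) ∩ (B ∩ gs s)).card ≤ (A ∩ B).card := by
    apply card_le_card
    intro y hy
    simp only [mem_inter] at hy ⊢
    tauto
  have c3 := card_union_add_card_inter (A ∩ gs s) (B ∩ gs s)
  omega

/-- Corollary for symmetric super-additive functionals. -/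
theorem sandwich_for_symmetric_superadditive (n a b t : ℕ)
    (hn : 0 < n) (ha : 0 < a) (hb : 0 < b) (ht : 0 < t)
    (h : Finset (Finset ℕ) → Finset (Finset ℕ) → ℝ)
    (hsymm : ∀ F G F' G' : Finset (Finset ℕ),
      FamOn n F → FamOn n G → FamOn n F' → FamOn n G' →
      F'.card = F.card → G'.card = G.card → h F G = h F' G')
    (hsuper : ∀ (k : ℕ) (F G : Finset (Finset ℕ)) (Fi Gi : ℕ → Finset (Finset ℕ)),
      FamOn n F → FamOn n G → (∀ i < k, FamOn n (Fi i) ∧ FamOn n (Gi i)) →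
      F ×ˢ G ⊆ (Finset.range k).biUnion (fun i => Fi i ×ˢ Gi i) →
      h F G ≤ ∑ i ∈ Finset.range k, h (Fi i) (Gi i)) :
    sSup {x : ℝ | ∃ u ∈ gs n, ∃ v ∈ gs n, ∃ s ∈ gs n, u + v = s + t ∧
        x = h (HirschF n a s u) (HirschF n b s v)}
      ≤ sSup {x : ℝ | ∃ F G : Finset (Finset ℕ),
          UniformOn n a F ∧ UniformOn n b G ∧ CrossInt t F G ∧ x = h F G} ∧
    sSup {x : ℝ | ∃ F G : Finset (Finset ℕ),
        UniformOn n a F ∧ UniformOn n b G ∧ CrossInt t F G ∧ x = h F G}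
      ≤ (n : ℝ) ^ 2 * sSup {x : ℝ | ∃ u ∈ gs n, ∃ v ∈ gs n, ∃ s ∈ gs n, u + v = s + t ∧
          x = h (HirschF n a s u) (HirschF n b s v)} := by
  classical
  set S1 : Set ℝ := {x : ℝ | ∃ u ∈ gs n, ∃ v ∈ gs n, ∃ s ∈ gs n, u + v = s + t ∧
      x = h (HirschF n a s u) (HirschF n b s v)} with hS1def
  set S2 : Set ℝ := {x : ℝ | ∃ F G : Finset (Finset ℕ),
      UniformOn n a F ∧ UniformOn n b G ∧ CrossInt t F G ∧ x = h F G} with hS2def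
  -- boundedness
  have hbdd1 : BddAbove S1 := by
    apply Set.Finite.bddAbove
    apply Set.Finite.subset (((gs n ×ˢ gs n ×ˢ gs n).image
      (fun p : ℕ × ℕ × ℕ => h (HirschF n a p.2.2 p.1) (HirschF n b p.2.2 p.2.1))).finite_toSet)
    rintro x ⟨u, hu, v, hv, s, hs, _, rfl⟩
    simp only [coe_image, Set.mem_image, mem_coe, mem_product]
    exact ⟨(u, v, s), ⟨hu, hv, hs⟩, rfl⟩
  have hbdd2 : BddAbove S2 := by
    apply Set.Finite.bddAbove
    apply Set.Finite.subset ((((gs n).powerset.powerset ×ˢ (gs n).powerset.powerset).image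
      (fun p : Finset (Finset ℕ) × Finset (Finset ℕ) => h p.1 p.2)).finite_toSet)
    rintro x ⟨F, G, hF, hG, _, rfl⟩
    simp only [coe_image, Set.mem_image, mem_coe, mem_product, mem_powerset]
    exact ⟨(F, G), ⟨fun A hA => mem_powerset.2 (hF A hA).1,
      fun A hA => mem_powerset.2 (hG A hA).1⟩, rfl⟩
  -- nonnegativity of h on families over [n]
  have hnn : ∀ F G : Finset (Finset ℕ), FamOn n F → FamOn n G → 0 ≤ h F G := by
    intro F G hF hG
    have := hsuper 2 F G (fun _ => F) (fun _ => G) hF hG (fun i _ => ⟨hF, hG⟩)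
      (by intro p hp; exact mem_biUnion.2 ⟨0, by simp, hp⟩)
    rw [Finset.sum_range_succ, Finset.sum_range_one] at this
    linarith
  have hzero : h ∅ ∅ = 0 := by
    have h1 := hsuper 0 ∅ ∅ (fun _ => ∅) (fun _ => ∅) famOn_empty famOn_empty
      (fun i hi => absurd hi (by omega)) (by simp)
    rw [Finset.sum_range_zero] at h1
    exact le_antisymm h1 (hnn ∅ ∅ famOn_empty famOn_empty)
  have hS2zero : (0 : ℝ) ∈ S2 :=
    ⟨∅, ∅, fun A hA => absurd hA (notMem_empty A), fun A hA => absurd hA (notMem_empty A),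
      fun A hA => absurd hA (notMem_empty A), hzero.symm⟩
  have hS2nonneg : 0 ≤ sSup S2 := le_csSup hbdd2 hS2zero
  have hS1nonneg : 0 ≤ sSup S1 := by
    apply Real.sSup_nonneg
    rintro x ⟨u, hu, v, hv, s, hs, _, rfl⟩
    exact hnn _ _ (famOn_of_uniformOn uniformOn_HirschF) (famOn_of_uniformOn uniformOn_HirschF)
  constructor
  · -- first inequality
    apply Real.sSup_le _ hS2nonneg
    rintro x ⟨u, hu, v, hv, s, hs, huv, rfl⟩
    exact le_csSup hbdd2 ⟨HirschF n a s u, HirschF n b s v, uniformOn_HirschF,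
      uniformOn_HirschF, crossInt_HirschF huv, rfl⟩
  · -- second inequality
    apply Real.sSup_le _ (mul_nonneg (by positivity) hS1nonneg)
    rintro x ⟨F, G, hF, hG, hFG, rfl⟩
    obtain ⟨F', G', hF', hG', hFG', hcF, hcG, hstab⟩ := exists_stable_pair F G hF hG hFG
    rw [hsymm F G F' G' (famOn_of_uniformOn hF) (famOn_of_uniformOn hG)
      (famOn_of_uniformOn hF') (famOn_of_uniformOn hG') hcF hcG]
    set cond : ℕ → Prop := fun i =>
      1 ≤ i / n + 1 + t - (i % n + 1) ∧ i / n + 1 + t - (i % n + 1) ≤ n ∧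
        i % n + 1 < i / n + 1 + t with hconddef
    set Fi : ℕ → Finset (Finset ℕ) := fun i =>
      if cond i then HirschF n a (i / n + 1) (i % n + 1) else ∅ with hFidef
    set Gi : ℕ → Finset (Finset ℕ) := fun i =>
      if cond i then HirschF n b (i / n + 1) (i / n + 1 + t - (i % n + 1)) else ∅ with hGidef
    have hFi_pos : ∀ i, cond i → Fi i = HirschF n a (i / n + 1) (i % n + 1) :=
      fun i hc => if_pos hc
    have hFi_neg : ∀ i, ¬ cond i → Fi i = ∅ := fun i hc => if_neg hc
    have hGi_pos : ∀ i, cond i → Gi i = HirschF n b (i / n + 1) (i / n + 1 + t - (i % n + 1)) :=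
      fun i hc => if_pos hc
    have hGi_neg : ∀ i, ¬ cond i → Gi i = ∅ := fun i hc => if_neg hc
    have hFam : ∀ i < n * n, FamOn n (Fi i) ∧ FamOn n (Gi i) := by
      intro i _
      by_cases hc : cond i
      · rw [hFi_pos i hc, hGi_pos i hc]
        exact ⟨famOn_of_uniformOn uniformOn_HirschF, famOn_of_uniformOn uniformOn_HirschF⟩
      · rw [hFi_neg i hc, hGi_neg i hc]
        exact ⟨famOn_empty, famOn_empty⟩
    have hcover : F' ×ˢ G' ⊆ (Finset.range (n * n)).biUnion (fun i => Fi i ×ˢ Gi i) := by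
      intro p hp
      obtain ⟨hp1, hp2⟩ := mem_product.1 hp
      obtain ⟨s, hsgs, hkey⟩ := exists_good_s hn ht hstab p.1 (hF' p.1 hp1).1
        (fun B' hB' => hFG' p.1 hp1 B' hB') p.2 hp2 (hG' p.2 hp2).1
      obtain ⟨hs1, hsn⟩ := mem_gs.1 hsgs
      have hcAs : (p.1 ∩ gs s).card ≤ s := by
        have := card_le_card (inter_subset_right (s₁ := p.1) (s₂ := gs s))
        rwa [card_gs] at this
      have hcBs : (p.2 ∩ gs s).card ≤ s := by
        have := card_le_card (inter_subset_right (s₁ := p.2) (s₂ := gs s))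
        rwa [card_gs] at this
      set v : ℕ := min ((p.2 ∩ gs s).card) (s + t - 1) with hvdef
      set u : ℕ := s + t - v with hudef
      have hu1 : 1 ≤ u := by omega
      have hucA : u ≤ (p.1 ∩ gs s).card := by omega
      have hun : u ≤ n := by omega
      have hv1 : 1 ≤ v := by omega
      have hvn : v ≤ n := by omega
      have hvcB : v ≤ (p.2 ∩ gs s).card := by omega
      set i : ℕ := (u - 1) + (s - 1) * n with hidef
      have hilt : i < n * n := by
        have h1 : i < (s - 1 + 1) * n := by
          rw [Nat.succ_mul]
          omega
        have h2 : (s - 1 + 1) * n ≤ n * n := Nat.mul_le_mul_right n (by omega)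
        omega
      have hdiv : i / n = s - 1 := by
        rw [hidef, Nat.add_mul_div_right _ _ hn, Nat.div_eq_of_lt (by omega)]
        omega
      have hmod : i % n = u - 1 := by
        rw [hidef, Nat.add_mul_mod_self_right]
        exact Nat.mod_eq_of_lt (by omega)
      have hs' : i / n + 1 = s := by omega
      have hu' : i % n + 1 = u := by omega
      have hv' : i / n + 1 + t - (i % n + 1) = v := by omega
      have hcond : cond i := by
        rw [hconddef]
        refine ⟨?_, ?_, ?_⟩ <;> omega
      apply mem_biUnion.2
      refine ⟨i, mem_range.2 hilt, mem_product.2 ⟨?_, ?_⟩⟩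
      · have e1 : Fi i = HirschF n a s u := by
          rw [hFi_pos i hcond, hs', hu']
        rw [e1]
        exact mem_HirschF.2 ⟨(hF' p.1 hp1).1, (hF' p.1 hp1).2, hucA⟩
      · have e2 : Gi i = HirschF n b s v := by
          have hv'' : s + t - (i % n + 1) = v := by omega
          rw [hGi_pos i hcond, hs', hv'']
        rw [e2]
        exact mem_HirschF.2 ⟨(hG' p.2 hp2).1, (hG' p.2 hp2).2, hvcB⟩
    have hstep := hsuper (n * n) F' G' Fi Gi (famOn_of_uniformOn hF')
      (famOn_of_uniformOn hG') hFam hcover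
    have hterm : ∀ i ∈ Finset.range (n * n), h (Fi i) (Gi i) ≤ sSup S1 := by
      intro i hi
      by_cases hc : cond i
      · rw [hFi_pos i hc, hGi_pos i hc]
        apply le_csSup hbdd1
        have hdivlt : i / n < n := (Nat.div_lt_iff_lt_mul hn).2 (mem_range.1 hi)
        have hmodlt : i % n < n := Nat.mod_lt i hn
        obtain ⟨hc1, hc2, hc3⟩ := hc
        refine ⟨i % n + 1, ?_, i / n + 1 + t - (i % n + 1), ?_, i / n + 1, ?_, ?_, rfl⟩
        · exact mem_gs.2 ⟨Nat.succ_le_succ (Nat.zero_le _), Nat.succ_le_of_lt hmodlt⟩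
        · exact mem_gs.2 ⟨hc1, hc2⟩
        · exact mem_gs.2 ⟨Nat.succ_le_succ (Nat.zero_le _), Nat.succ_le_of_lt hdivlt⟩
        · exact Nat.add_sub_cancel' (Nat.le_of_lt hc3)
      · rw [hFi_neg i hc, hGi_neg i hc, hzero]
        exact hS1nonneg
    calc h F' G' ≤ ∑ i ∈ Finset.range (n * n), h (Fi i) (Gi i) := hstep
      _ ≤ ∑ _i ∈ Finset.range (n * n), sSup S1 := Finset.sum_le_sum hterm
      _ = (n * n : ℕ) • sSup S1 := by rw [Finset.sum_const, card_range]
      _ = (n : ℝ) ^ 2 * sSup S1 := by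
          rw [nsmul_eq_mul]
          push_cast
          ring
end

section
/- Let n ≥ 4 be an integer such that C(n,2) is even. Then N_prod(n, 2, n−2, 1) = (C(n,2)/2)². -/
/-!
Taking complements in `[n]` turns an `(n - k)`-uniform family `G` into a `k`-uniform family of
the same size, and a `k`-set meets an `(n - k)`-set exactly when it is not that set's complement.
So `F` and `G` are cross-intersecting iff `F` and the complements of `G` are disjoint families of
`k`-sets, whence `|F| + |G| ≤ C(n,k)` and `|F| ⬝ |G| ≤ ⌊C(n,k)/2⌋ ⬝ ⌈C(n,k)/2⌉`. Splitting the
`k`-sets into two halves and complementing one of them attains the bound.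
-/

open Finset

/-- The maximum of `|F| ⬝ |G|` over cross-`t`-intersecting pairs where `F` is an
`a`-uniform family and `G` a `b`-uniform family of subsets of `[n]`. -/
noncomputable def NProd (n a b t : ℕ) : ℕ :=
  sSup {x : ℕ | ∃ F G : Finset (Finset ℕ),
    UniformOn n a F ∧ UniformOn n b G ∧ CrossInt t F G ∧ x = F.card * G.card}

theorem Nat.mul_le_half_mul_of_add_le {a b N : ℕ} (h : a + b ≤ N) :
    a * b ≤ N / 2 * (N - N / 2) := by
  obtain ⟨q, r, hr, rfl⟩ : ∃ q r, r < 2 ∧ N = 2 * q + r :=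
    ⟨N / 2, N % 2, N.mod_lt two_pos, by omega⟩
  rw [show (2 * q + r) / 2 = q by omega, show 2 * q + r - q = q + r by omega]
  interval_cases r <;> nlinarith [sq_nonneg ((a : ℤ) - b)]

namespace Finset

variable {α : Type*} [DecidableEq α] {s : Finset α} {k : ℕ}

theorem sdiff_injOn_powerset (s : Finset α) :
    Set.InjOn (s \ ·) (s.powerset : Set (Finset α)) := by
  intro A hA B hB h
  rw [← sdiff_sdiff_eq_self (mem_powerset.mp hA), ← sdiff_sdiff_eq_self (mem_powerset.mp hB)]
  exact congrArg (s \ ·) h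

theorem card_image_sdiff_of_subset_powersetCard {F : Finset (Finset α)}
    (hF : F ⊆ powersetCard k s) : #(F.image (s \ ·)) = #F :=
  card_image_of_injOn <| (sdiff_injOn_powerset s).mono fun _ hA =>
    mem_powerset.mpr (mem_powersetCard.mp (hF hA)).1

theorem image_sdiff_subset_powersetCard {F : Finset (Finset α)} (hF : F ⊆ powersetCard k s) :
    F.image (s \ ·) ⊆ powersetCard (#s - k) s := by
  intro B hB
  obtain ⟨_, hA, rfl⟩ := mem_image.mp hB
  obtain ⟨hAs, rfl⟩ := mem_powersetCard.mp (hF hA)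
  exact mem_powersetCard.mpr ⟨sdiff_subset, card_sdiff_of_subset hAs⟩

theorem nonempty_inter_iff_ne_sdiff {A B : Finset α} (hA : A ⊆ s) (hB : B ⊆ s)
    (hcard : #A + #B = #s) : (A ∩ B).Nonempty ↔ A ≠ s \ B := by
  rw [nonempty_iff_ne_empty, Ne, Ne, not_iff_not, ← disjoint_iff_inter_eq_empty]
  constructor
  · intro h
    exact eq_of_subset_of_card_le (subset_sdiff.mpr ⟨hA, h⟩)
      (by rw [card_sdiff_of_subset hB]; omega)
  · rintro rfl
    exact disjoint_sdiff_self_left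

end Finset

theorem uniformOn_iff_subset_powersetCard {n m : ℕ} {F : Finset (Finset ℕ)} :
    UniformOn n m F ↔ F ⊆ powersetCard m (gs n) := by
  simp only [UniformOn, subset_iff, mem_powersetCard]

theorem card_gs_s14 (n : ℕ) : #(gs n) = n := by simp [gs]

section Complement

variable {s : Finset ℕ} {k : ℕ} {F G : Finset (Finset ℕ)}

theorem crossInt_one_iff_disjoint_image_sdiff (hk : k ≤ #s) (hF : F ⊆ powersetCard k s)
    (hG : G ⊆ powersetCard (#s - k) s) : CrossInt 1 F G ↔ Disjoint F (G.image (s \ ·)) := by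
  have key : ∀ A ∈ F, ∀ B ∈ G, 1 ≤ #(A ∩ B) ↔ A ≠ s \ B := fun A hA B hB => by
    obtain ⟨hAs, hAk⟩ := mem_powersetCard.mp (hF hA)
    obtain ⟨hBs, hBk⟩ := mem_powersetCard.mp (hG hB)
    rw [one_le_card]
    exact nonempty_inter_iff_ne_sdiff hAs hBs (by omega)
  simp only [CrossInt, disjoint_left, mem_image, not_exists, not_and]
  exact forall₂_congr fun A hA => ⟨fun h B hB hAB => (key A hA B hB).mp (h B hB) hAB.symm,
    fun h B hB => (key A hA B hB).mpr fun hAB => h B hB hAB.symm⟩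

theorem card_mul_card_le_of_crossInt (hk : k ≤ #s) (hF : F ⊆ powersetCard k s)
    (hG : G ⊆ powersetCard (#s - k) s) (hFG : CrossInt 1 F G) :
    #F * #G ≤ (#s).choose k / 2 * ((#s).choose k - (#s).choose k / 2) := by
  have hcompl : G.image (s \ ·) ⊆ powersetCard k s := by
    simpa [Nat.sub_sub_self hk] using image_sdiff_subset_powersetCard hG
  apply Nat.mul_le_half_mul_of_add_le
  calc #F + #G = #(F ∪ G.image (s \ ·)) := by
        rw [card_union_of_disjoint ((crossInt_one_iff_disjoint_image_sdiff hk hF hG).mp hFG),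
          card_image_sdiff_of_subset_powersetCard hG]
    _ ≤ #(powersetCard k s) := card_le_card (union_subset hF hcompl)
    _ = (#s).choose k := card_powersetCard k s

theorem exists_crossInt_card_mul_card_eq (hk : k ≤ #s) :
    ∃ F G, F ⊆ powersetCard k s ∧ G ⊆ powersetCard (#s - k) s ∧ CrossInt 1 F G ∧
      #F * #G = (#s).choose k / 2 * ((#s).choose k - (#s).choose k / 2) := by
  set P := powersetCard k s
  obtain ⟨F, hFP, hF⟩ := exists_subset_card_eq (show (#s).choose k / 2 ≤ #P by
    rw [card_powersetCard]; omega)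
  have hPF : P \ F ⊆ P := sdiff_subset
  have hG := image_sdiff_subset_powersetCard hPF
  refine ⟨F, _, hFP, hG, ?_, ?_⟩
  · rw [crossInt_one_iff_disjoint_image_sdiff hk hFP hG, disjoint_left]
    intro A hAF hAG
    obtain ⟨B, hB, rfl⟩ := mem_image.mp hAG
    obtain ⟨C, hC, rfl⟩ := mem_image.mp hB
    rw [Finset.sdiff_sdiff_eq_self (mem_powersetCard.mp (hPF hC)).1] at hAF
    exact (mem_sdiff.mp hC).2 hAF
  · rw [card_image_sdiff_of_subset_powersetCard hPF, card_sdiff_of_subset hFP, hF,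
      card_powersetCard]

end Complement

theorem nprod_complement {n k : ℕ} (hk : k ≤ n) :
    NProd n k (n - k) 1 = n.choose k / 2 * (n.choose k - n.choose k / 2) := by
  have hk' : k ≤ #(gs n) := (card_gs_s14 n).symm ▸ hk
  refine IsGreatest.csSup_eq ⟨?_, ?_⟩
  · obtain ⟨F, G, hF, hG, hFG, hcard⟩ := exists_crossInt_card_mul_card_eq hk'
    rw [card_gs_s14] at hG hcard
    exact ⟨F, G, uniformOn_iff_subset_powersetCard.mpr hF,
      uniformOn_iff_subset_powersetCard.mpr hG, hFG, hcard.symm⟩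
  · rintro x ⟨F, G, hF, hG, hFG, rfl⟩
    rw [uniformOn_iff_subset_powersetCard] at hF hG
    have := card_mul_card_le_of_crossInt hk' hF (by rwa [card_gs_s14]) hFG
    rwa [card_gs_s14] at this

/-- the exact value of `N_prod(n, 2, n−2, 1)` when `C(n,2)` is even. -/
theorem nprod_two_complement (n : ℕ) (hn : 4 ≤ n) (heven : 2 ∣ n.choose 2) :
    NProd n 2 (n - 2) 1 = (n.choose 2 / 2) ^ 2 := by
  rw [nprod_complement (by omega), sq]
  congr 1
  omega
end
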